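/- In a simple binary matroid, if C is a circuit and f ∈ cl(C) \ C, then C ∪ {f} is a double circuit of degree 3. -/

import Mathlib

open Set

namespace TropicalPaper

variable {α : Type*}

/-- A circuit of a matroid is a minimal dependent set. -/
def Circuit (M : Matroid α) (C : Set α) : Prop := Minimal M.Dep C

/-- A matroid is simple if every circuit has at least 3 elements
(equivalently: no loops and no parallel pairs). -/
def Simple (M : Matroid α) : Prop := ∀ C, Circuit M C → 3 ≤ C.ncard

/-- A set `𝒞'` of circuits of `M` is a tropical basis if for every non-closed
set `X` there is `C ∈ 𝒞'` with `|C \ X| = 1`. -/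
def TropicalBasis (M : Matroid α) (𝒞' : Set (Set α)) : Prop :=
  (∀ C ∈ 𝒞', Circuit M C) ∧
  ∀ X ⊆ M.E, M.closure X ≠ X → ∃ C ∈ 𝒞', (C \ X).ncard = 1

/-- A tropical basis is minimal if no circuit can be removed from it. -/
def MinimalTropicalBasis (M : Matroid α) (𝒞' : Set (Set α)) : Prop :=
  TropicalBasis M 𝒞' ∧ ∀ C ∈ 𝒞', ¬ TropicalBasis M (𝒞' \ {C})

/-- `A` is orthogonal to a family `𝒟` if `|A ∩ D| ≠ 1` for all `D ∈ 𝒟`. -/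
def Orthogonal (A : Set α) (𝒟 : Set (Set α)) : Prop :=
  ∀ D ∈ 𝒟, (A ∩ D).ncard ≠ 1

/-- The rank of a set: the maximal cardinality of an independent subset. -/
noncomputable def rk (M : Matroid α) (X : Set α) : ℕ :=
  sSup {n | ∃ I, I ⊆ X ∧ M.Indep I ∧ I.ncard = n}

/-- `D` is a double circuit if `rank D = |D| - 2 = rank (D \ {e})` for all `e ∈ D`. -/
def DoubleCircuit (M : Matroid α) (D : Set α) : Prop :=
  D ⊆ M.E ∧ D.Finite ∧
    ∀ e ∈ D, rk M D = D.ncard - 2 ∧ rk M (D \ {e}) = D.ncard - 2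

/-- `P` is the canonical partition of the double circuit `D`: a partition of `D`
into nonempty parts whose complements within `D` are exactly the circuits contained
in `D`. The degree of the double circuit is the number of parts of `P`. -/
def DCPartition (M : Matroid α) (D : Set α) (P : Set (Set α)) : Prop :=
  (∀ p ∈ P, p.Nonempty) ∧ (∀ p ∈ P, p ⊆ D) ∧ P.PairwiseDisjoint id ∧
    ⋃₀ P = D ∧ ∀ C, (Circuit M C ∧ C ⊆ D) ↔ ∃ p ∈ P, C = D \ p

/-- A matroid is binary iff the symmetric difference of any two distinct circuits
contains a circuit. -/
def Binary (M : Matroid α) : Prop :=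
  ∀ C₁ C₂, Circuit M C₁ → Circuit M C₂ → C₁ ≠ C₂ →
    ∃ C, C ⊆ (C₁ \ C₂) ∪ (C₂ \ C₁) ∧ Circuit M C

lemma Circuit.dep {M : Matroid α} {C : Set α} (h : Circuit M C) : M.Dep C := h.1

lemma Circuit.subset_ground {M : Matroid α} {C : Set α} (h : Circuit M C) : C ⊆ M.E :=
  h.1.subset_ground

lemma Circuit.eq_of_dep_subset {M : Matroid α} {C D : Set α} (h : Circuit M C)
    (hD : M.Dep D) (hDC : D ⊆ C) : D = C :=
  hDC.antisymm (h.2 hD hDC)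

lemma Circuit.diff_indep {M : Matroid α} {C : Set α} (h : Circuit M C) {e : α} (he : e ∈ C) :
    M.Indep (C \ {e}) := by
  by_contra hi
  have hd : M.Dep (C \ {e}) := ⟨hi, (diff_subset).trans h.subset_ground⟩
  have := h.eq_of_dep_subset hd diff_subset
  exact (this ▸ he).2 rfl

lemma Circuit.nonempty {M : Matroid α} {C : Set α} (h : Circuit M C) : C.Nonempty := by
  rcases C.eq_empty_or_nonempty with rfl | hne
  · exact absurd M.empty_indep h.dep.not_indep
  · exact hne

lemma Circuit.basis_diff {M : Matroid α} {C : Set α} (h : Circuit M C) {e : α} (he : e ∈ C) :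
    M.IsBasis (C \ {e}) C := by
  refine (h.diff_indep he).isBasis_of_forall_insert diff_subset fun x hx => ?_
  have hxe : x = e := by
    rcases hx with ⟨hx1, hx2⟩
    by_contra hne
    exact hx2 ⟨hx1, hne⟩
  subst hxe
  have : insert x (C \ {x}) = C := insert_diff_singleton.trans (by rwa [insert_eq_of_mem])
  rw [this]; exact h.dep

lemma Circuit.closure_diff {M : Matroid α} {C : Set α} (h : Circuit M C) {e : α} (he : e ∈ C) :
    M.closure (C \ {e}) = M.closure C := (h.basis_diff he).closure_eq_closure

lemma basis_encard_eq {M : Matroid α} {I J X : Set α} (hI : M.IsBasis I X) (hJ : M.IsBasis J X) :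
    I.encard = J.encard :=
  hI.isBase_restrict.encard_eq_encard_of_isBase hJ.isBase_restrict

lemma rk_eq_of_basis {M : Matroid α} {I X : Set α} [M.Finite] (hX : X ⊆ M.E)
    (hI : M.IsBasis I X) : rk M X = I.ncard := by
  have hXfin : X.Finite := M.set_finite X hX
  refine IsGreatest.csSup_eq ⟨⟨I, hI.subset, hI.indep, rfl⟩, ?_⟩
  rintro n ⟨J, hJX, hJi, rfl⟩
  obtain ⟨I', hI', hJI'⟩ := hJi.subset_isBasis_of_subset hJX hX
  have h1 : J.encard ≤ I'.encard := encard_le_encard hJI'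
  have h2 : I'.encard = I.encard := basis_encard_eq hI' hI
  have := h1.trans_eq h2
  have hIfin : I.Finite := hXfin.subset hI.subset
  rw [Set.ncard_def, Set.ncard_def]
  exact ENat.toNat_le_toNat this hIfin.encard_lt_top.ne

lemma exists_circuit_subset {M : Matroid α} [M.Finite] {X : Set α} (hX : M.Dep X) :
    ∃ C ⊆ X, Circuit M C := by
  have hfin : X.Finite := M.set_finite X hX.subset_ground
  obtain ⟨C, hCmem, hCmin⟩ : ∃ C ∈ {Y | M.Dep Y ∧ Y ⊆ X},
      ∀ D ∈ {Y | M.Dep Y ∧ Y ⊆ X}, id D ≤ id C → id C = id D := by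
    obtain ⟨C, hC1, hC2⟩ := Set.Finite.exists_minimal
      (show Set.Finite {Y | M.Dep Y ∧ Y ⊆ X} from
        Set.Finite.finite_subsets hfin |>.subset (fun Y hY => hY.2))
      (show Set.Nonempty {Y | M.Dep Y ∧ Y ⊆ X} from ⟨X, hX, subset_rfl⟩)
    exact ⟨C, hC1, fun D hD hDC => (hC2 hD hDC).antisymm hDC⟩
  refine ⟨C, hCmem.2, hCmem.1, fun D hD hDC => ?_⟩
  have : D ∈ {Y | M.Dep Y ∧ Y ⊆ X} := ⟨hD, hDC.trans hCmem.2⟩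
  have h := hCmin D this hDC
  simp only [id] at h
  exact le_of_eq h

theorem stmt9 (M : Matroid α) [M.Finite] (hM : Simple M) (hB : Binary M)
    (C : Set α) (hC : Circuit M C) (f : α) (hf : f ∈ M.closure C \ C) :
    DoubleCircuit M (C ∪ {f}) ∧
      ∃ P, DCPartition M (C ∪ {f}) P ∧ P.ncard = 3 := by
  obtain ⟨hfcl, hfC⟩ := hf
  have hCE : C ⊆ M.E := hC.subset_ground
  have hCfin : C.Finite := M.set_finite C hCE
  have hfE : f ∈ M.E := M.closure_subset_ground C hfcl
  set D : Set α := C ∪ {f} with hD_def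
  have hDmem : ∀ x, x ∈ D ↔ x ∈ C ∨ x = f := fun x => by
    rw [hD_def, mem_union, mem_singleton_iff]
  have hCD : C ⊆ D := subset_union_left
  have hfD : f ∈ D := (hDmem f).mpr (Or.inr rfl)
  have hDE : D ⊆ M.E := union_subset hCE (singleton_subset_iff.mpr hfE)
  have hDfin : D.Finite := hCfin.union (finite_singleton f)
  have hDcard : D.ncard = C.ncard + 1 := by
    rw [hD_def, union_singleton, ncard_insert_of_notMem hfC hCfin]
  have hcard3 : 3 ≤ C.ncard := hM C hC
  -- a circuit C' through f inside D
  obtain ⟨e₀, he₀⟩ := hC.nonempty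
  set I₀ : Set α := C \ {e₀} with hI₀_def
  have hI₀i : M.Indep I₀ := hC.diff_indep he₀
  have hI₀clo : M.closure I₀ = M.closure C := hC.closure_diff he₀
  have hfI₀ : f ∉ I₀ := fun h => hfC h.1
  have hfd : M.Dep (insert f I₀) := hI₀i.insert_dep_iff.mpr ⟨hI₀clo ▸ hfcl, hfI₀⟩
  obtain ⟨C', hC'sub, hC'⟩ := exists_circuit_subset hfd
  have hfC' : f ∈ C' := by
    by_contra hfc
    have : C' ⊆ I₀ := fun x hx => ((hC'sub hx).elim (fun h => absurd (h ▸ hx) hfc) id)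
    exact (hI₀i.subset this).not_dep hC'.dep
  have hC'D : C' ⊆ D := hC'sub.trans (insert_subset hfD ((diff_subset).trans hCD))
  set A : Set α := C' \ {f} with hA_def
  have hA_C : A ⊆ C := fun x hx =>
    ((hC'sub hx.1).elim (fun h => absurd h hx.2) (fun h => h.1))
  have hfA : f ∉ A := fun h => h.2 rfl
  have hC'eq : C' = insert f A := by
    rw [hA_def, insert_diff_singleton, insert_eq_of_mem hfC']
  have hAfin : A.Finite := hCfin.subset hA_C
  have hA2 : 2 ≤ A.ncard := by
    have h3 : 3 ≤ C'.ncard := hM C' hC'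
    rw [hC'eq, ncard_insert_of_notMem hfA hAfin] at h3
    omega
  have hAne : A.Nonempty := by
    rw [← ncard_pos hAfin]; omega
  have hAneC : A ≠ C := by
    intro h
    have hCC' : C ⊆ C' := h ▸ (diff_subset : C' \ {f} ⊆ C')
    have := hC'.eq_of_dep_subset hC.dep hCC'
    exact hfC (this ▸ hfC')
  have hCAne : (C \ A).Nonempty := by
    rw [diff_nonempty]
    exact fun h => hAneC (hA_C.antisymm h)
  have hfCA : f ∉ C \ A := fun h => hfC h.1
  -- key uniqueness
  have key : ∀ K, Circuit M K → K ⊆ D → f ∈ K → K ≠ C' → K = (C \ A) ∪ {f} := by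
    intro K hK hKD hfK hKne
    obtain ⟨L, hLsub, hL⟩ := hB K C' hK hC' hKne
    have hLC : L ⊆ C := by
      intro x hx
      rcases hLsub hx with ⟨hxK, hxC'⟩ | ⟨hxC', hxK⟩
      · rcases (hDmem x).mp (hKD hxK) with h | h
        · exact h
        · exact absurd (h ▸ hfC') hxC'
      · rcases (hDmem x).mp (hC'D hxC') with h | h
        · exact h
        · exact absurd (h ▸ hfK) hxK
    have hLeqC : L = C := hC.eq_of_dep_subset hL.dep hLC
    have hCsub : C ⊆ (K \ C') ∪ (C' \ K) := hLeqC ▸ hLsub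
    ext x
    constructor
    · intro hxK
      rcases (hDmem x).mp (hKD hxK) with hxC | hxf
      · refine Or.inl ⟨hxC, fun hxA => ?_⟩
        rcases hCsub hxC with h | h
        · exact h.2 hxA.1
        · exact h.2 hxK
      · exact Or.inr hxf
    · rintro (⟨hxC, hxA⟩ | hxf)
      · rcases hCsub hxC with h | h
        · exact h.1
        · exact absurd ⟨h.1, fun hxf : x ∈ ({f} : Set α) => hfC (hxf ▸ hxC)⟩ hxA
      · exact (mem_singleton_iff.mp hxf) ▸ hfK
  -- the third circuit
  set C₂ : Set α := (C \ A) ∪ {f} with hC₂_def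
  have hC₂D : C₂ ⊆ D := union_subset ((diff_subset).trans hCD) (singleton_subset_iff.mpr hfD)
  have hC₂circ : Circuit M C₂ := by
    have hCneC' : C ≠ C' := fun h => hfC (h ▸ hfC')
    obtain ⟨K, hKsub, hK⟩ := hB C C' hC hC' hCneC'
    have hKsub' : K ⊆ C₂ := by
      intro x hx
      rcases hKsub hx with ⟨hxC, hxC'⟩ | ⟨hxC', hxC⟩
      · exact Or.inl ⟨hxC, fun hxA => hxC' hxA.1⟩
      · rcases (hDmem x).mp (hC'D hxC') with h | h
        · exact absurd h hxC
        · exact Or.inr h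
    have hfK : f ∈ K := by
      by_contra hfK
      have hKC : K ⊆ C \ A := fun x hx =>
        ((hKsub' hx).elim id
          (fun h => absurd (mem_singleton_iff.mp h ▸ hx) hfK))
      have hKeq : K = C := hC.eq_of_dep_subset hK.dep (hKC.trans diff_subset)
      obtain ⟨a, ha⟩ := hAne
      exact (hKC (hKeq ▸ hA_C ha)).2 ha
    have hKneC' : K ≠ C' := by
      intro h
      obtain ⟨a, ha⟩ := hAne
      have haC' : a ∈ C' := by rw [hC'eq]; exact Or.inr ha
      have : a ∈ C₂ := hKsub' (h ▸ haC')
      rcases this with h1 | h1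
      · exact h1.2 ha
      · exact hfA (mem_singleton_iff.mp h1 ▸ ha)
    have hKeq := key K hK (hKsub'.trans hC₂D) hfK hKneC'
    exact hKeq ▸ hK
  -- set computations
  have hDf : D \ {f} = C := by
    rw [hD_def, union_singleton, insert_diff_self_of_notMem hfC]
  have hDA : D \ A = C₂ := by
    ext x
    rw [hC₂_def]
    constructor
    · rintro ⟨hxD, hxA⟩
      rcases (hDmem x).mp hxD with h | h
      · exact Or.inl ⟨h, hxA⟩
      · exact Or.inr h
    · rintro (⟨hx, hxA⟩ | hx)
      · exact ⟨hCD hx, hxA⟩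
      · refine ⟨(hDmem x).mpr (Or.inr hx), fun h => hfA (mem_singleton_iff.mp hx ▸ h)⟩
  have hDCA : D \ (C \ A) = C' := by
    rw [hC'eq]
    ext x
    constructor
    · rintro ⟨hxD, hxCA⟩
      rcases (hDmem x).mp hxD with h | h
      · right
        by_contra hxA
        exact hxCA ⟨h, hxA⟩
      · exact Or.inl h
    · rintro (hx | hxA)
      · exact ⟨(hDmem x).mpr (Or.inr hx), fun h => hfC (hx ▸ h.1)⟩
      · exact ⟨hCD (hA_C hxA), fun h => h.2 hxA⟩
  -- rank computations
  have hrkD : rk M D = D.ncard - 2 := by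
    have hbasis : M.IsBasis I₀ D := by
      refine hI₀i.isBasis_of_forall_insert ((diff_subset).trans hCD) ?_
      rintro x ⟨hxD, hxI₀⟩
      rcases (hDmem x).mp hxD with hxC | hxf
      · have hxe : x = e₀ := by
          by_contra h
          exact hxI₀ ⟨hxC, h⟩
        subst hxe
        have hins : insert x I₀ = C := by
          rw [hI₀_def, insert_diff_singleton, insert_eq_of_mem he₀]
        rw [hins]; exact hC.dep
      · rw [hxf]; exact hfd
    rw [rk_eq_of_basis hDE hbasis, hI₀_def, ncard_diff_singleton_of_mem he₀, hDcard]
    omega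
  have hrk_diff : ∀ e ∈ D, rk M (D \ {e}) = D.ncard - 2 := by
    intro e he
    rcases (hDmem e).mp he with heC | hef
    · have hIe : M.Indep (C \ {e}) := hC.diff_indep heC
      have hsub : C \ {e} ⊆ D \ {e} := diff_subset_diff_left hCD
      have hbasis : M.IsBasis (C \ {e}) (D \ {e}) := by
        refine hIe.isBasis_of_forall_insert hsub ?_
        rintro x ⟨⟨hxD, hxe⟩, hxI⟩
        have hxf : x = f := by
          rcases (hDmem x).mp hxD with hxC | h
          · exact absurd ⟨hxC, hxe⟩ hxI
          · exact h
        subst hxf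
        exact hIe.insert_dep_iff.mpr ⟨(hC.closure_diff heC) ▸ hfcl, fun h => hfC h.1⟩
      rw [rk_eq_of_basis ((diff_subset).trans hDE) hbasis,
        ncard_diff_singleton_of_mem heC, hDcard]
      omega
    · subst hef
      rw [hDf, rk_eq_of_basis hCE (hC.basis_diff he₀),
        ncard_diff_singleton_of_mem he₀, hDcard]
      omega
  refine ⟨⟨hDE, hDfin, fun e he => ⟨hrkD, hrk_diff e he⟩⟩, ?_⟩
  -- the partition
  refine ⟨{{f}, A, C \ A}, ⟨?_, ?_, ?_, ?_, ?_⟩, ?_⟩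
  · intro p hp
    simp only [mem_insert_iff, mem_singleton_iff] at hp
    rcases hp with rfl | rfl | rfl
    · exact singleton_nonempty f
    · exact hAne
    · exact hCAne
  · intro p hp
    simp only [mem_insert_iff, mem_singleton_iff] at hp
    rcases hp with rfl | rfl | rfl
    · exact singleton_subset_iff.mpr hfD
    · exact hA_C.trans hCD
    · exact (diff_subset).trans hCD
  · intro p hp q hq hpq
    simp only [mem_insert_iff, mem_singleton_iff] at hp hq
    have d1 : Disjoint ({f} : Set α) A := disjoint_singleton_left.mpr hfA
    have d2 : Disjoint ({f} : Set α) (C \ A) := disjoint_singleton_left.mpr hfCA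
    have d3 : Disjoint A (C \ A) := disjoint_sdiff_self_right
    rcases hp with rfl | rfl | rfl <;> rcases hq with rfl | rfl | rfl <;>
      first
        | exact absurd rfl hpq
        | exact d1
        | exact d2
        | exact d3
        | exact d1.symm
        | exact d2.symm
        | exact d3.symm
  · rw [sUnion_insert, sUnion_insert, sUnion_singleton, union_diff_cancel hA_C,
      hD_def, union_comm]
  · intro K
    constructor
    · rintro ⟨hK, hKD⟩
      by_cases hfK : f ∈ K
      · by_cases hKC' : K = C'
        · exact ⟨C \ A, Or.inr (Or.inr rfl), by rw [hDCA, hKC']⟩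
        · exact ⟨A, Or.inr (Or.inl rfl), by rw [hDA]; exact key K hK hKD hfK hKC'⟩
      · have hKC : K ⊆ C := fun x hx =>
          ((hDmem x).mp (hKD hx)).resolve_right (fun h => hfK (h ▸ hx))
        have hKeq := hC.eq_of_dep_subset hK.dep hKC
        exact ⟨{f}, Or.inl rfl, by rw [hDf, hKeq]⟩
    · rintro ⟨p, hp, rfl⟩
      simp only [mem_insert_iff, mem_singleton_iff] at hp
      rcases hp with rfl | rfl | rfl
      · rw [hDf]; exact ⟨hC, hCD⟩
      · rw [hDA]; exact ⟨hC₂circ, hC₂D⟩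
      · rw [hDCA]; exact ⟨hC', hC'D⟩
  · have hne1 : ({f} : Set α) ≠ A := fun h => hfA (h ▸ rfl)
    have hne2 : ({f} : Set α) ≠ C \ A := fun h => hfCA (h ▸ rfl)
    have hne3 : A ≠ C \ A := by
      obtain ⟨a, ha⟩ := hAne
      exact fun h => (h ▸ ha).2 ha
    rw [Set.ncard_insert_of_notMem (by simp [hne1, hne2])
        ((finite_singleton _).insert _),
      Set.ncard_insert_of_notMem (by simp [hne3]) (finite_singleton _),
      ncard_singleton]
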